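/- arXiv:1805.07491 — 3 statements merged into one kernel-verified Lean document; each statement's English description precedes it below -/
import Mathlib

section
/- Let T be a tight typing with T(∅) = T(A_in,out) = [0,0], and let A ⊎ B = A_in,out be a partition with T(A) defined and T(B) undefined. Then the minimum over P(T) of θ(B) equals −max T(A) and the maximum over P(T) of θ(B) equals −min T(A). Consequently, extending T by the assignment T'(B) := −T(A) yields a tight typing T' with P(T) = P(T'). -/
open Finset

namespace FlowTyping

noncomputable section

/-- A typing assigns (optionally) a closed interval `[r, s]` (encoded as a pair)
to subsets of the input/output arcs. -/
abbrev Typing (ι : Type*) := Finset ι → Option (ℝ × ℝ)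

variable {ι : Type*} [Fintype ι] [DecidableEq ι]

/-- `theta isIn A f` = sum of `f` over the input arcs in `A` minus the sum of `f`
over the output arcs in `A`. -/
def theta (isIn : ι → Bool) (A : Finset ι) (f : ι → ℝ) : ℝ :=
  ∑ a ∈ A, (if isIn a then f a else - f a)

/-- An IO assignment (a nonnegative function on the input/output arcs) satisfies a
typing `T` if for every subset `A` where `T A` is defined, `theta A f ∈ T A`. -/
def Satisfies (isIn : ι → Bool) (T : Typing ι) (f : ι → ℝ) : Prop :=
  (∀ a, 0 ≤ f a) ∧
    ∀ A r s, T A = some (r, s) → r ≤ theta isIn A f ∧ theta isIn A f ≤ s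

/-- The polytope of all IO assignments satisfying the typing `T`. -/
def Poly (isIn : ι → Bool) (T : Typing ι) : Set (ι → ℝ) := {f | Satisfies isIn T f}

/-- Well-formedness: every assigned interval is a genuine interval `[r, s]`, `r ≤ s`. -/
def WF (T : Typing ι) : Prop := ∀ A r s, T A = some (r, s) → r ≤ s

/-- A typing is total if it is defined on every subset of the input/output arcs. -/
def TotalT (T : Typing ι) : Prop := ∀ A, (T A).isSome

/-- A typing is tight if every value of every assigned interval is attained on the
polytope `Poly T`. -/
def Tight (isIn : ι → Bool) (T : Typing ι) : Prop :=
  ∀ A r s, T A = some (r, s) → ∀ x, r ≤ x → x ≤ s →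
    ∃ f ∈ Poly isIn T, theta isIn A f = x

/-- A flow network: a finite set of nodes `V`, a finite set of internal arcs `E`
(each with a source and a target node), input/output arcs indexed by `ι`
(each attached to a node; `isIn a` tells whether `a` is an input arc), and
lower/upper capacities on all arcs. -/
structure Network (ι : Type*) (isIn : ι → Bool) where
  V : Type
  E : Type
  [fintV : Fintype V]
  [fintE : Fintype E]
  [decV : DecidableEq V]
  src : E → V
  tgt : E → V
  ioNode : ι → V
  lcE : E → ℝ
  ucE : E → ℝ
  lcIO : ι → ℝ
  ucIO : ι → ℝ
  lcE_nonneg : ∀ e, 0 ≤ lcE e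
  lcE_le_ucE : ∀ e, lcE e ≤ ucE e
  lcIO_nonneg : ∀ a, 0 ≤ lcIO a
  lcIO_le_ucIO : ∀ a, lcIO a ≤ ucIO a

attribute [instance] Network.fintV Network.fintE Network.decV

variable {isIn : ι → Bool}

/-- `f` (on the io arcs) together with `g` (on the internal arcs) is a feasible
flow: capacity constraints on every arc, and flow conservation at every node. -/
def Network.Feasible (N : Network ι isIn) (f : ι → ℝ) (g : N.E → ℝ) : Prop :=
  (∀ a, N.lcIO a ≤ f a ∧ f a ≤ N.ucIO a) ∧
  (∀ e, N.lcE e ≤ g e ∧ g e ≤ N.ucE e) ∧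
  ∀ v : N.V,
    ((∑ e : N.E, if N.tgt e = v then g e else 0) +
        ∑ a : ι, if N.ioNode a = v ∧ isIn a then f a else 0) =
      ((∑ e : N.E, if N.src e = v then g e else 0) +
        ∑ a : ι, if N.ioNode a = v ∧ ¬ isIn a then f a else 0)

/-- A typing is sound for `N` if every IO assignment satisfying it extends to a
feasible flow in `N`. -/
def Sound (N : Network ι isIn) (T : Typing ι) : Prop :=
  ∀ f ∈ Poly isIn T, ∃ g : N.E → ℝ, N.Feasible f g

/-- A typing is complete for `N` if every feasible flow of `N` (restricted to the
io arcs) satisfies it. -/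
def Complete (N : Network ι isIn) (T : Typing ι) : Prop :=
  ∀ f g, N.Feasible f g → Satisfies isIn T f

/-- Undirected adjacency of nodes via internal arcs. -/
def NAdj (N : Network ι isIn) (v w : N.V) : Prop :=
  ∃ e : N.E, (N.src e = v ∧ N.tgt e = w) ∨ (N.src e = w ∧ N.tgt e = v)

/-- Two io arcs belong to the same (connected) component of the network. -/
def SameComp (N : Network ι isIn) (a b : ι) : Prop :=
  Relation.ReflTransGen (NAdj N) (N.ioNode a) (N.ioNode b)

/-- `T` is locally total for `N`: it is defined on every set of io arcs lying in a
single component, and undefined on every union of two nonempty sets of io arcs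
from two distinct components. -/
def LocallyTotal (N : Network ι isIn) (T : Typing ι) : Prop :=
  (∀ B : Finset ι, (∀ a ∈ B, ∀ b ∈ B, SameComp N a b) → (T B).isSome) ∧
  (∀ B B' : Finset ι, B.Nonempty → B'.Nonempty →
    (∀ a ∈ B, ∀ b ∈ B, SameComp N a b) →
    (∀ a ∈ B', ∀ b ∈ B', SameComp N a b) →
    (∀ a ∈ B, ∀ b ∈ B', ¬ SameComp N a b) → T (B ∪ B') = none)

/-- Principal typing: locally total, tight (and well-formed), sound and complete. -/
def PrincipalFor (N : Network ι isIn) (T : Typing ι) : Prop :=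
  WF T ∧ LocallyTotal N T ∧ Tight isIn T ∧ Sound N T ∧ Complete N T

/-! On `P(T)` the constraint `T(A ∪ B) = [0,0]` forces `θ(B) = -θ(A)`, by additivity of `θ`
over the disjoint union. Tightness says that `θ(A)` takes exactly the values `[r,s]` on `P(T)`,
so `θ(B)` takes exactly the values `[-s,-r]`. The new constraint `T'(B) = [-s,-r]` is thus
already implied by `T`, which leaves the polytope unchanged and keeps the typing tight. -/

section

variable {T : Typing ι} {A B : Finset ι}

def Typing.extend (T : Typing ι) (B : Finset ι) (I : ℝ × ℝ) : Typing ι :=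
  fun C => if C = B then some I else T C

omit [Fintype ι] in
theorem theta_union (hdisj : Disjoint A B) (f : ι → ℝ) :
    theta isIn (A ∪ B) f = theta isIn A f + theta isIn B f :=
  Finset.sum_union hdisj

omit [Fintype ι] in
theorem theta_eq_neg_of_mem_poly (hdisj : Disjoint A B) (hAB : T (A ∪ B) = some (0, 0))
    {f : ι → ℝ} (hf : f ∈ Poly isIn T) : theta isIn B f = -theta isIn A f := by
  have h := hf.2 _ _ _ hAB
  rw [theta_union hdisj] at h
  linarith [h.1, h.2]

omit [Fintype ι] [DecidableEq ι] in
theorem image_theta_poly_eq_Icc (ht : Tight isIn T) {r s : ℝ} (hA : T A = some (r, s)) :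
    theta isIn A '' Poly isIn T = Set.Icc r s := by
  ext x
  constructor
  · rintro ⟨f, hf, rfl⟩
    exact hf.2 A r s hA
  · rintro ⟨hr, hs⟩
    exact ht A r s hA x hr hs

omit [Fintype ι] in
theorem image_theta_poly_eq_neg_Icc (ht : Tight isIn T) (hdisj : Disjoint A B)
    (hAB : T (A ∪ B) = some (0, 0)) {r s : ℝ} (hA : T A = some (r, s)) :
    theta isIn B '' Poly isIn T = Set.Icc (-s) (-r) := by
  calc theta isIn B '' Poly isIn T
      = (Neg.neg ∘ theta isIn A) '' Poly isIn T :=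
        Set.image_congr fun _ hf => theta_eq_neg_of_mem_poly hdisj hAB hf
    _ = Set.Icc (-s) (-r) := by
        rw [Set.image_comp, image_theta_poly_eq_Icc ht hA, Set.image_neg_Icc]

omit [Fintype ι] in
theorem extend_eq_some_iff_of_ne {C : Finset ι} (hCB : C ≠ B) {I J : ℝ × ℝ} :
    T.extend B I C = some J ↔ T C = some J := by
  simp only [Typing.extend, if_neg hCB]

omit [Fintype ι] in
theorem poly_extend_eq (hB : T B = none) {lo hi : ℝ}
    (himage : theta isIn B '' Poly isIn T ⊆ Set.Icc lo hi) :
    Poly isIn (T.extend B (lo, hi)) = Poly isIn T := by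
  ext f
  constructor
  · rintro ⟨hnn, hsat⟩
    refine ⟨hnn, fun C r s hC => hsat C r s ?_⟩
    have hCB : C ≠ B := by
      rintro rfl
      simp [hB] at hC
    exact (extend_eq_some_iff_of_ne hCB).2 hC
  · intro hf
    refine ⟨hf.1, fun C r s hC => ?_⟩
    by_cases hCB : C = B
    · subst hCB
      obtain ⟨rfl, rfl⟩ : lo = r ∧ hi = s := by simpa [Typing.extend] using hC
      exact himage ⟨f, hf, rfl⟩
    · exact hf.2 C r s ((extend_eq_some_iff_of_ne hCB).1 hC)

omit [Fintype ι] in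
theorem Tight.extend (ht : Tight isIn T) (hB : T B = none) {lo hi : ℝ}
    (himage : theta isIn B '' Poly isIn T = Set.Icc lo hi) :
    Tight isIn (T.extend B (lo, hi)) := by
  rw [Tight, poly_extend_eq hB himage.subset]
  intro C r s hC x hr hs
  by_cases hCB : C = B
  · subst hCB
    obtain ⟨rfl, rfl⟩ : lo = r ∧ hi = s := by simpa [Typing.extend] using hC
    exact himage.symm.subset ⟨hr, hs⟩
  · exact ht C r s ((extend_eq_some_iff_of_ne hCB).1 hC) x hr hs

end

theorem extend_undefined_side_general {ι : Type*} [Fintype ι] [DecidableEq ι]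
    (isIn : ι → Bool) (T : Typing ι) (hwf : WF T) (ht : Tight isIn T)
    (hu : T Finset.univ = some (0, 0))
    (A B : Finset ι) (hcover : A ∪ B = Finset.univ) (hdisj : Disjoint A B)
    (r s : ℝ) (hA : T A = some (r, s)) (hB : T B = none) :
    IsLeast {x | ∃ f ∈ Poly isIn T, theta isIn B f = x} (-s) ∧
    IsGreatest {x | ∃ f ∈ Poly isIn T, theta isIn B f = x} (-r) ∧
    Tight isIn (fun C => if C = B then some (-s, -r) else T C) ∧
    Poly isIn (fun C => if C = B then some (-s, -r) else T C) = Poly isIn T := by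
  have hrs : -s ≤ -r := neg_le_neg (hwf A r s hA)
  have himage : theta isIn B '' Poly isIn T = Set.Icc (-s) (-r) :=
    image_theta_poly_eq_neg_Icc ht hdisj (hcover ▸ hu) hA
  rw [show {x | ∃ f ∈ Poly isIn T, theta isIn B f = x} = Set.Icc (-s) (-r) from himage]
  exact ⟨isLeast_Icc hrs, isGreatest_Icc hrs, ht.extend hB himage,
    poly_extend_eq hB himage.subset⟩

/-- For a tight typing `T` with `T ∅ = T(A_in,out) = [0,0]` and a
partition `A ⊎ B = A_in,out` with `T A = [r,s]` defined and `T B` undefined: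
the minimum of `θ(B)` over `P(T)` is `-s`, its maximum is `-r`, and extending `T`
by `T' B := [-s,-r]` yields a tight typing with the same polytope. -/
theorem extend_undefined_side {ι : Type*} [Fintype ι] [DecidableEq ι]
    (isIn : ι → Bool) (T : Typing ι) (hwf : WF T) (ht : Tight isIn T)
    (h0 : T ∅ = some (0, 0)) (hu : T Finset.univ = some (0, 0))
    (A B : Finset ι) (hcover : A ∪ B = Finset.univ) (hdisj : Disjoint A B)
    (r s : ℝ) (hA : T A = some (r, s)) (hB : T B = none) :
    IsLeast {x | ∃ f ∈ Poly isIn T, theta isIn B f = x} (-s) ∧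
    IsGreatest {x | ∃ f ∈ Poly isIn T, theta isIn B f = x} (-r) ∧
    Tight isIn (fun C => if C = B then some (-s, -r) else T C) ∧
    Poly isIn (fun C => if C = B then some (-s, -r) else T C) = Poly isIn T :=
  extend_undefined_side_general isIn T hwf ht hu A B hcover hdisj r s hA hB

end
end FlowTyping
end

section
/- Let T', T'' be principal typings for disjoint networks N', N''. Define the total parallel addition T'⊞T'' by (T'⊞T'')(A) := T'(A∩A'_in,out) + T''(A∩A''_in,out) for all A (with interval addition [r1,s1]+[r2,s2] = [r1+r2, s1+s2]) except (T'⊞T'')(∅) = (T'⊞T'')(A'∪A'') = [0,0]. Then T'⊞T'' is a tight, sound, and complete typing for N' ∥ N'', and it is total whenever T' and T'' are total. -/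
open Finset

namespace FlowTyping

noncomputable section

variable {ι : Type*} [Fintype ι] [DecidableEq ι]

variable {isIn : ι → Bool}

variable {ι κ : Type*} [Fintype ι] [DecidableEq ι] [Fintype κ] [DecidableEq κ]
variable {isIn : ι → Bool} {isIn' : κ → Bool}

/-- The parallel (disjoint) composition `N' ∥ N''` of two networks over disjoint
arc sets. -/
def parNetwork (N : Network ι isIn) (M : Network κ isIn') :
    Network (ι ⊕ κ) (Sum.elim isIn isIn') where
  V := N.V ⊕ M.V
  E := N.E ⊕ M.E
  fintV := inferInstance
  fintE := inferInstance
  decV := inferInstance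
  src := Sum.map N.src M.src
  tgt := Sum.map N.tgt M.tgt
  ioNode := Sum.map N.ioNode M.ioNode
  lcE := Sum.elim N.lcE M.lcE
  ucE := Sum.elim N.ucE M.ucE
  lcIO := Sum.elim N.lcIO M.lcIO
  ucIO := Sum.elim N.ucIO M.ucIO
  lcE_nonneg := by rintro (e | e); exacts [N.lcE_nonneg e, M.lcE_nonneg e]
  lcE_le_ucE := by rintro (e | e); exacts [N.lcE_le_ucE e, M.lcE_le_ucE e]
  lcIO_nonneg := by rintro (a | a); exacts [N.lcIO_nonneg a, M.lcIO_nonneg a]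
  lcIO_le_ucIO := by rintro (a | a); exacts [N.lcIO_le_ucIO a, M.lcIO_le_ucIO a]

/-- The left part of a finite set of arcs of the disjoint union. -/
def leftPart (A : Finset (ι ⊕ κ)) : Finset ι :=
  Finset.univ.filter (fun a => Sum.inl a ∈ A)

/-- The right part of a finite set of arcs of the disjoint union. -/
def rightPart (A : Finset (ι ⊕ κ)) : Finset κ :=
  Finset.univ.filter (fun b => Sum.inr b ∈ A)


/-- Minkowski sum of optional intervals (undefined if either is undefined). -/
def addI : Option (ℝ × ℝ) → Option (ℝ × ℝ) → Option (ℝ × ℝ)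
  | some (r1, s1), some (r2, s2) => some (r1 + r2, s1 + s2)
  | _, _ => none

/-- Total parallel addition `T' ⊞ T''` of typings over disjoint arc sets:
intervals of the two parts of each arc set are added. -/
def totAdd (T : Typing ι) (U : Typing κ) : Typing (ι ⊕ κ) := fun A =>
  if A = ∅ ∨ A = Finset.univ then some (0, 0)
  else addI (T (leftPart A)) (U (rightPart A))

/-!
Feasible flows of `N' ∥ N''` are exactly pairs of feasible flows of the components, and `theta`
is additive over the two sides. For a principal typing, tightness and flow conservation force
`T ∅ = [0, 0]`, and `T univ = [0, 0]` wherever defined; hence an IO assignment satisfies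
`T' ⊞ T''` iff its two restrictions satisfy `T'` and `T''`, the extra constraints at `∅` and
`A' ∪ A''` being implied by conservation. Soundness and completeness then hold componentwise, and
tightness follows by splitting `x ∈ [r₁ + r₂, s₁ + s₂]` as `x₁ + x₂` with `xᵢ ∈ [rᵢ, sᵢ]` and
realising each part separately.
-/

lemma theta_empty {α : Type*} {p : α → Bool} (f : α → ℝ) : theta p ∅ f = 0 := sum_empty

lemma sum_sum_ite_eq_sum {α β M : Type*} [Fintype α] [Fintype β] [DecidableEq β]
    [AddCommMonoid M] (p : α → β) (g : α → M) :
    ∑ b, ∑ a, (if p a = b then g a else 0) = ∑ a, g a := by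
  rw [sum_comm]; simp

section Single

variable {α : Type*} {p : α → Bool} {T : Typing α}

lemma Tight.eq_of_theta_eq (hT : Tight p T) (hWF : WF T) {A : Finset α} {r s c : ℝ}
    (hA : T A = some (r, s)) (hc : ∀ f ∈ Poly p T, theta p A f = c) : r = c ∧ s = c := by
  have hrs := hWF A r s hA
  obtain ⟨f, hf, hfr⟩ := hT A r s hA r le_rfl hrs
  obtain ⟨f', hf', hfs⟩ := hT A r s hA s hrs le_rfl
  exact ⟨hfr ▸ hc f hf, hfs ▸ hc f' hf'⟩

variable [Fintype α] {N : Network α p}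

-- Summed over all nodes, conservation counts every internal arc once on each side.
lemma Network.Feasible.theta_univ_eq_zero {f : α → ℝ} {g : N.E → ℝ} (h : N.Feasible f g) :
    theta p univ f = 0 := by
  have key := sum_congr rfl fun v (_ : v ∈ (univ : Finset N.V)) => h.2.2 v
  simp only [sum_add_distrib, ite_and, sum_sum_ite_eq_sum] at key
  have hθ : theta p univ f = (∑ a, if p a then f a else 0) - ∑ a, if ¬ p a then f a else 0 := by
    rw [theta, ← sum_sub_distrib]
    exact sum_congr rfl fun a _ => by cases p a <;> simp
  linarith

lemma Sound.theta_eq_zero_of_eq_empty_or_univ (hT : Sound N T) {f : α → ℝ} (hf : f ∈ Poly p T)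
    {A : Finset α} (hA : A = ∅ ∨ A = univ) : theta p A f = 0 := by
  rcases hA with rfl | rfl
  · exact theta_empty f
  · obtain ⟨g, hg⟩ := hT f hf
    exact hg.theta_univ_eq_zero

variable [DecidableEq α]

lemma PrincipalFor.eq_zero_of_eq_empty_or_univ (hT : PrincipalFor N T) {A : Finset α}
    (hA : A = ∅ ∨ A = univ) {r s : ℝ} (h : T A = some (r, s)) : r = 0 ∧ s = 0 :=
  hT.2.2.1.eq_of_theta_eq hT.1 h fun _ hf => hT.2.2.2.1.theta_eq_zero_of_eq_empty_or_univ hf hA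

lemma PrincipalFor.empty_eq (hT : PrincipalFor N T) : T ∅ = some (0, 0) := by
  obtain ⟨⟨r, s⟩, h⟩ := Option.isSome_iff_exists.1 (hT.2.1.1 ∅ (by simp))
  obtain ⟨rfl, rfl⟩ := hT.eq_zero_of_eq_empty_or_univ (Or.inl rfl) h
  exact h

lemma PrincipalFor.poly_nonempty (hT : PrincipalFor N T) : (Poly p T).Nonempty :=
  let ⟨f, hf, _⟩ := hT.2.2.1 ∅ 0 0 hT.empty_eq 0 le_rfl le_rfl
  ⟨f, hf⟩

end Single

lemma addI_eq_some {o₁ o₂ : Option (ℝ × ℝ)} {r s : ℝ} (h : addI o₁ o₂ = some (r, s)) :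
    ∃ r₁ s₁ r₂ s₂, o₁ = some (r₁, s₁) ∧ o₂ = some (r₂, s₂) ∧ r = r₁ + r₂ ∧ s = s₁ + s₂ := by
  rcases o₁ with _ | ⟨r₁, s₁⟩ <;> rcases o₂ with _ | ⟨r₂, s₂⟩ <;>
    simp only [addI, reduceCtorEq, Option.some.injEq, Prod.mk.injEq] at h
  exact ⟨r₁, s₁, r₂, s₂, rfl, rfl, h.1.symm, h.2.symm⟩

section Parts

variable {α β : Type*} [DecidableEq α] [DecidableEq β]

lemma leftPart_eq_toLeft [Fintype α] (A : Finset (α ⊕ β)) : leftPart A = A.toLeft := by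
  ext; simp [leftPart]

lemma rightPart_eq_toRight [Fintype β] (A : Finset (α ⊕ β)) : rightPart A = A.toRight := by
  ext; simp [rightPart]

end Parts

section Parallel

variable {α β : Type*} [Fintype α] [Fintype β] {p : α → Bool} {q : β → Bool}

lemma parNetwork_feasible_iff (N : Network α p) (M : Network β q) (f : α ⊕ β → ℝ)
    (g : N.E ⊕ M.E → ℝ) :
    (parNetwork N M).Feasible f g ↔
      N.Feasible (f ∘ Sum.inl) (g ∘ Sum.inl) ∧ M.Feasible (f ∘ Sum.inr) (g ∘ Sum.inr) := by
  have sum_E (h : (parNetwork N M).E → ℝ) :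
      ∑ e, h e = ∑ e : N.E, h (Sum.inl e) + ∑ e : M.E, h (Sum.inr e) :=
    Fintype.sum_sum_type h
  simp only [Network.Feasible, sum_E, Fintype.sum_sum_type]
  simp only [parNetwork, Sum.forall, Sum.map_inl, Sum.map_inr, Sum.elim_inl, Sum.elim_inr,
    Sum.inl.injEq, Sum.inr.injEq, reduceCtorEq, false_and, if_false, sum_const_zero, add_zero,
    zero_add, Function.comp_apply]
  tauto

variable [DecidableEq α] [DecidableEq β]

lemma theta_sum (A : Finset (α ⊕ β)) (f : α ⊕ β → ℝ) :
    theta (Sum.elim p q) A f =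
      theta p (leftPart A) (f ∘ Sum.inl) + theta q (rightPart A) (f ∘ Sum.inr) := by
  rw [theta, sum_sum_eq_sum_toLeft_add_sum_toRight, leftPart_eq_toLeft, rightPart_eq_toRight]
  rfl

variable {N : Network α p} {M : Network β q} {T : Typing α} {U : Typing β}

lemma totAdd_disjSum (hT : PrincipalFor N T) (hU : PrincipalFor M U) {B : Finset α}
    {C : Finset β} {r₁ s₁ r₂ s₂ : ℝ} (hB : T B = some (r₁, s₁)) (hC : U C = some (r₂, s₂)) :
    totAdd T U (B.disjSum C) = some (r₁ + r₂, s₁ + s₂) := by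
  rw [totAdd, leftPart_eq_toLeft, rightPart_eq_toRight, toLeft_disjSum, toRight_disjSum, hB, hC]
  split_ifs with h
  · have hBC : (B = ∅ ∨ B = univ) ∧ (C = ∅ ∨ C = univ) := by
      rcases h with h | h
      · obtain ⟨rfl, rfl⟩ := disjSum_eq_empty.1 h; simp
      · obtain ⟨rfl, rfl⟩ := disjSum_eq_iff.1 h; simp
    obtain ⟨rfl, rfl⟩ := hT.eq_zero_of_eq_empty_or_univ hBC.1 hB
    obtain ⟨rfl, rfl⟩ := hU.eq_zero_of_eq_empty_or_univ hBC.2 hC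
    simp
  · rfl

lemma mem_poly_totAdd_iff (hT : PrincipalFor N T) (hU : PrincipalFor M U) {f : α ⊕ β → ℝ} :
    f ∈ Poly (Sum.elim p q) (totAdd T U) ↔
      f ∘ Sum.inl ∈ Poly p T ∧ f ∘ Sum.inr ∈ Poly q U := by
  constructor
  -- A set `B` of left arcs is tested on `B ⊎ ∅`, where the right summand `U ∅` is `[0, 0]`.
  · rintro ⟨hnn, hsat⟩
    refine ⟨⟨fun a => hnn _, fun B r s hB => ?_⟩, ⟨fun b => hnn _, fun C r s hC => ?_⟩⟩
    · have := hsat _ _ _ (totAdd_disjSum hT hU hB hU.empty_eq)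
      rwa [add_zero, add_zero, theta_sum, leftPart_eq_toLeft, rightPart_eq_toRight,
        toLeft_disjSum, toRight_disjSum, theta_empty, add_zero] at this
    · have := hsat _ _ _ (totAdd_disjSum hT hU hT.empty_eq hC)
      rwa [zero_add, zero_add, theta_sum, leftPart_eq_toLeft, rightPart_eq_toRight,
        toLeft_disjSum, toRight_disjSum, theta_empty, zero_add] at this
  · rintro ⟨hf₁, hf₂⟩
    refine ⟨Sum.forall.2 ⟨hf₁.1, hf₂.1⟩, fun A r s hA => ?_⟩
    rw [theta_sum]
    rw [totAdd] at hA
    split_ifs at hA with h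
    · obtain ⟨rfl, rfl⟩ : (0 : ℝ) = r ∧ (0 : ℝ) = s := by simpa using hA
      have hparts : (leftPart A = ∅ ∨ leftPart A = univ) ∧
          (rightPart A = ∅ ∨ rightPart A = univ) := by
        rcases h with rfl | rfl <;> simp [leftPart, rightPart]
      rw [hT.2.2.2.1.theta_eq_zero_of_eq_empty_or_univ hf₁ hparts.1,
        hU.2.2.2.1.theta_eq_zero_of_eq_empty_or_univ hf₂ hparts.2]
      simp
    · obtain ⟨r₁, s₁, r₂, s₂, h₁, h₂, rfl, rfl⟩ := addI_eq_some hA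
      have b₁ := hf₁.2 _ _ _ h₁
      have b₂ := hf₂.2 _ _ _ h₂
      constructor <;> linarith [b₁.1, b₁.2, b₂.1, b₂.2]

lemma sumElim_mem_poly_totAdd (hT : PrincipalFor N T) (hU : PrincipalFor M U) {f₁ : α → ℝ}
    {f₂ : β → ℝ} (hf₁ : f₁ ∈ Poly p T) (hf₂ : f₂ ∈ Poly q U) :
    Sum.elim f₁ f₂ ∈ Poly (Sum.elim p q) (totAdd T U) :=
  (mem_poly_totAdd_iff hT hU).2 ⟨hf₁, hf₂⟩

open scoped Pointwise in
lemma totAdd_tight (hT : PrincipalFor N T) (hU : PrincipalFor M U) :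
    Tight (Sum.elim p q) (totAdd T U) := by
  intro A r s hA x hrx hxs
  by_cases h : A = ∅ ∨ A = univ
  · obtain ⟨f₁, hf₁⟩ := hT.poly_nonempty
    obtain ⟨f₂, hf₂⟩ := hU.poly_nonempty
    have hf := sumElim_mem_poly_totAdd hT hU hf₁ hf₂
    have hθ := hf.2 A r s hA
    rw [totAdd, if_pos h] at hA
    obtain ⟨rfl, rfl⟩ : (0 : ℝ) = r ∧ (0 : ℝ) = s := by simpa using hA
    exact ⟨_, hf, by linarith [hθ.1, hθ.2]⟩
  · rw [totAdd, if_neg h] at hA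
    obtain ⟨r₁, s₁, r₂, s₂, h₁, h₂, rfl, rfl⟩ := addI_eq_some hA
    have hx : x ∈ Set.Icc r₁ s₁ + Set.Icc r₂ s₂ := by
      rw [Set.Icc_add_Icc (hT.1 _ _ _ h₁) (hU.1 _ _ _ h₂)]
      exact ⟨hrx, hxs⟩
    obtain ⟨x₁, ⟨hr₁, hs₁⟩, x₂, ⟨hr₂, hs₂⟩, rfl⟩ := hx
    obtain ⟨f₁, hf₁, rfl⟩ := hT.2.2.1 _ _ _ h₁ x₁ hr₁ hs₁
    obtain ⟨f₂, hf₂, rfl⟩ := hU.2.2.1 _ _ _ h₂ x₂ hr₂ hs₂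
    exact ⟨Sum.elim f₁ f₂, sumElim_mem_poly_totAdd hT hU hf₁ hf₂, theta_sum A _⟩

lemma totAdd_sound (hT : PrincipalFor N T) (hU : PrincipalFor M U) :
    Sound (parNetwork N M) (totAdd T U) := by
  intro f hf
  obtain ⟨hf₁, hf₂⟩ := (mem_poly_totAdd_iff hT hU).1 hf
  obtain ⟨g₁, hg₁⟩ := hT.2.2.2.1 _ hf₁
  obtain ⟨g₂, hg₂⟩ := hU.2.2.2.1 _ hf₂
  exact ⟨Sum.elim g₁ g₂, (parNetwork_feasible_iff N M f _).2 ⟨hg₁, hg₂⟩⟩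

lemma totAdd_complete (hT : PrincipalFor N T) (hU : PrincipalFor M U) :
    Complete (parNetwork N M) (totAdd T U) := fun f g h =>
  let ⟨h₁, h₂⟩ := (parNetwork_feasible_iff N M f g).1 h
  (mem_poly_totAdd_iff hT hU).2 ⟨hT.2.2.2.2 _ _ h₁, hU.2.2.2.2 _ _ h₂⟩

lemma TotalT.totAdd (hT : TotalT T) (hU : TotalT U) : TotalT (totAdd T U) := by
  intro A
  rw [FlowTyping.totAdd]
  split_ifs
  · rfl
  · obtain ⟨⟨r₁, s₁⟩, h₁⟩ := Option.isSome_iff_exists.1 (hT (leftPart A))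
    obtain ⟨⟨r₂, s₂⟩, h₂⟩ := Option.isSome_iff_exists.1 (hU (rightPart A))
    rw [h₁, h₂]
    rfl

end Parallel

/-- The total parallel addition of principal typings for disjoint
networks is a tight, sound, and complete typing for `N' ∥ N''`; it is total
whenever the two given typings are. -/
theorem totAdd_sound_complete_tight (N : Network ι isIn) (M : Network κ isIn')
    (T : Typing ι) (U : Typing κ)
    (hT : PrincipalFor N T) (hU : PrincipalFor M U) :
    Tight (Sum.elim isIn isIn') (totAdd T U) ∧
    Sound (parNetwork N M) (totAdd T U) ∧
    Complete (parNetwork N M) (totAdd T U) ∧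
    (TotalT T → TotalT U → TotalT (totAdd T U)) :=
  ⟨totAdd_tight hT hU, totAdd_sound hT hU, totAdd_complete hT hU, TotalT.totAdd⟩

end
end FlowTyping
end

section
/- Strong subtyping is a partial order refining subtyping: for principal typings S, T, U over the same A_in,out, (1) T ≪: T; (2) if T ≪: U and U ≪: T then T = U; (3) if S ≪: T and T ≪: U then S ≪: U; and (4) T ≪: U implies T <: U, but the converse fails in general. -/
open Finset

namespace FlowTyping

noncomputable section

variable {ι : Type*} [Fintype ι] [DecidableEq ι]

variable {isIn : ι → Bool}

variable {ι : Type*} [Fintype ι] [DecidableEq ι]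

/-- A principal typing over a fixed arc set: tight, total (well-formed), and
sound-and-complete for some network with that boundary. -/
def IsPrincipal (isIn : ι → Bool) (T : Typing ι) : Prop :=
  WF T ∧ TotalT T ∧ Tight isIn T ∧
    ∃ N : Network ι isIn, Sound N T ∧ Complete N T

/-- Subtyping: `U <: T` iff `P(U) ⊇ P(T)`. -/
def SubT (isIn : ι → Bool) (U T : Typing ι) : Prop :=
  Poly isIn T ⊆ Poly isIn U

/-- Restriction of a typing to subsets of a given set `P` of arcs. -/
def restrictTo (P : Finset ι) (T : Typing ι) : Typing ι := fun A =>
  if A ⊆ P then T A else none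

/-- The set of input arcs. -/
def inputs (isIn : ι → Bool) : Finset ι := Finset.univ.filter (fun a => isIn a)

/-- The set of output arcs. -/
def outputs (isIn : ι → Bool) : Finset ι := Finset.univ.filter (fun a => ¬ isIn a)

/-- `T` is input-safe for `U`: every (nonnegative) IO assignment whose input part
satisfies the restriction of `T` to input subsets satisfies `T` iff it
satisfies `U`. -/
def InputSafe (isIn : ι → Bool) (T U : Typing ι) : Prop :=
  ∀ g : ι → ℝ, Satisfies isIn (restrictTo (inputs isIn) T) g →
    (Satisfies isIn T g ↔ Satisfies isIn U g)

/-- `T` is output-safe for `U`: symmetric condition on the output side. -/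
def OutputSafe (isIn : ι → Bool) (T U : Typing ι) : Prop :=
  ∀ g : ι → ℝ, Satisfies isIn (restrictTo (outputs isIn) T) g →
    (Satisfies isIn T g ↔ Satisfies isIn U g)

/-- Strong subtyping: `U ≪: T` iff `T` is both input-safe and output-safe for `U`. -/
def StrongSubT (isIn : ι → Bool) (U T : Typing ι) : Prop :=
  InputSafe isIn T U ∧ OutputSafe isIn T U

/-!
Tightness makes a principal typing the exact shadow of its polytope: each interval `T A` is the
range of `theta A` over `P(T)`. So principal typings with the same polytope coincide, and when
`P(U) ⊆ P(T)` every value that `U` allows on a set of arcs is allowed by `T`; an assignment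
passing the restricted check of `U` then passes that of `T`, which is what transitivity needs.
Strong subtyping implies subtyping by applying safety to an assignment of `P(U)` itself.

For the failure of the converse, the tightest typing of the flow set of a network is principal as
soon as that flow set is compact, convex and cut out by its own typing. Two inputs and two outputs
of capacity `[0, 1]`, all on one node or split over two nodes, give `P(U) ⊊ P(T)`; one unit sent
from input `0` to output `3` is accepted by `T` and has inputs feasible for `U`, yet `U` rejects it.
-/

section Typings

variable {ι : Type*} {isIn : ι → Bool}

lemma isLinearMap_theta (isIn : ι → Bool) (A : Finset ι) :
    IsLinearMap ℝ (theta isIn A) where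
  map_add f g := by
    simp only [theta, Pi.add_apply, ← Finset.sum_add_distrib]
    exact Finset.sum_congr rfl fun a _ => by split_ifs <;> ring
  map_smul c f := by
    simp only [theta, Pi.smul_apply, smul_eq_mul, Finset.mul_sum]
    exact Finset.sum_congr rfl fun a _ => by split_ifs <;> ring

lemma continuous_theta [Fintype ι] (isIn : ι → Bool) (A : Finset ι) :
    Continuous (theta isIn A) :=
  (isLinearMap_theta isIn A).mk'.continuous_of_finiteDimensional

lemma theta_congr {A : Finset ι} {f g : ι → ℝ} (h : ∀ a ∈ A, f a = g a) :
    theta isIn A f = theta isIn A g :=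
  Finset.sum_congr rfl fun a ha => by rw [h a ha]

lemma theta_singleton (a : ι) (f : ι → ℝ) :
    theta isIn {a} f = if isIn a then f a else -f a :=
  Finset.sum_singleton _ _

lemma Satisfies.restrict [DecidableEq ι] {T : Typing ι} {g : ι → ℝ} (P : Finset ι)
    (h : Satisfies isIn T g) : Satisfies isIn (restrictTo P T) g := by
  refine ⟨h.1, fun A r s hA => ?_⟩
  unfold FlowTyping.restrictTo at hA
  split_ifs at hA
  exact h.2 A r s hA

lemma Satisfies.restrict_congr [DecidableEq ι] {P : Finset ι} {T : Typing ι} {g h : ι → ℝ}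
    (hh : Satisfies isIn (restrictTo P T) h) (hg : ∀ a, 0 ≤ g a)
    (hgh : ∀ a ∈ P, h a = g a) :
    Satisfies isIn (restrictTo P T) g := by
  refine ⟨hg, fun A r s hA => ?_⟩
  have hAP : A ⊆ P := by
    by_contra hAP
    simp [FlowTyping.restrictTo, hAP] at hA
  rw [← theta_congr fun a ha => hgh a (hAP ha)]
  exact hh.2 A r s hA

lemma Tight.mem_Icc_of_poly_subset {T U : Typing ι} (hT : Tight isIn T)
    (hsub : Poly isIn T ⊆ Poly isIn U) {A : Finset ι} {r s r' s' x : ℝ}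
    (hTA : T A = some (r, s)) (hUA : U A = some (r', s')) (hx : x ∈ Set.Icc r s) :
    x ∈ Set.Icc r' s' := by
  obtain ⟨f, hf, rfl⟩ := hT A r s hTA x hx.1 hx.2
  exact (hsub hf).2 A r' s' hUA

lemma eq_of_poly_eq {T U : Typing ι} (hTw : WF T) (hTt : TotalT T) (hT : Tight isIn T)
    (hUw : WF U) (hUt : TotalT U) (hU : Tight isIn U) (h : Poly isIn T = Poly isIn U) :
    T = U := by
  funext A
  obtain ⟨⟨r, s⟩, hTA⟩ := Option.isSome_iff_exists.mp (hTt A)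
  obtain ⟨⟨r', s'⟩, hUA⟩ := Option.isSome_iff_exists.mp (hUt A)
  have hr := hT.mem_Icc_of_poly_subset h.le hTA hUA (Set.left_mem_Icc.2 (hTw A r s hTA))
  have hs := hT.mem_Icc_of_poly_subset h.le hTA hUA (Set.right_mem_Icc.2 (hTw A r s hTA))
  have hr' := hU.mem_Icc_of_poly_subset h.ge hUA hTA (Set.left_mem_Icc.2 (hUw A r' s' hUA))
  have hs' := hU.mem_Icc_of_poly_subset h.ge hUA hTA (Set.right_mem_Icc.2 (hUw A r' s' hUA))
  rw [hTA, hUA, le_antisymm hr'.1 hr.1, le_antisymm hs.2 hs'.2]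

lemma Satisfies.restrict_of_poly_subset [DecidableEq ι] {P : Finset ι} {T U : Typing ι}
    {g : ι → ℝ} (hU : Tight isIn U) (hUt : TotalT U) (hsub : Poly isIn U ⊆ Poly isIn T)
    (hg : Satisfies isIn (restrictTo P U) g) : Satisfies isIn (restrictTo P T) g := by
  refine ⟨hg.1, fun A r s hA => ?_⟩
  unfold FlowTyping.restrictTo at hA
  split_ifs at hA with hAP
  obtain ⟨⟨r', s'⟩, hUA⟩ := Option.isSome_iff_exists.mp (hUt A)
  exact hU.mem_Icc_of_poly_subset hsub hUA hA
    (hg.2 A r' s' (by rw [FlowTyping.restrictTo, if_pos hAP, hUA]))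

lemma strongSubT_refl [Fintype ι] [DecidableEq ι] (T : Typing ι) : StrongSubT isIn T T :=
  ⟨fun _ _ => Iff.rfl, fun _ _ => Iff.rfl⟩

lemma StrongSubT.subT [Fintype ι] [DecidableEq ι] {T U : Typing ι} (h : StrongSubT isIn T U) :
    SubT isIn T U :=
  fun f hf => (h.1 f (hf.restrict _)).1 hf

lemma StrongSubT.trans [Fintype ι] [DecidableEq ι] {S T U : Typing ι}
    (hST : StrongSubT isIn S T) (hTU : StrongSubT isIn T U) (hU : Tight isIn U)
    (hUt : TotalT U) : StrongSubT isIn S U :=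
  ⟨fun g hg => (hTU.1 g hg).trans (hST.1 g (hg.restrict_of_poly_subset hU hUt hTU.subT)),
    fun g hg => (hTU.2 g hg).trans (hST.2 g (hg.restrict_of_poly_subset hU hUt hTU.subT))⟩

end Typings

section TypingOf

variable {ι : Type*} {isIn : ι → Bool} {P : Set (ι → ℝ)}

/-- The tightest typing satisfied by `P`; through `sInf` and `sSup` it is meaningful only for
nonempty bounded `P`. -/
def typingOf (isIn : ι → Bool) (P : Set (ι → ℝ)) : Typing ι := fun A =>
  some (sInf (theta isIn A '' P), sSup (theta isIn A '' P))

lemma typingOf_eq_some {A : Finset ι} {r s : ℝ} (h : typingOf isIn P A = some (r, s)) :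
    r = sInf (theta isIn A '' P) ∧ s = sSup (theta isIn A '' P) := by
  simp only [typingOf, Option.some.injEq, Prod.mk.injEq] at h
  exact ⟨h.1.symm, h.2.symm⟩

lemma totalT_typingOf : TotalT (typingOf isIn P) := fun _ => rfl

lemma theta_mem_Icc_of_satisfies_typingOf (hne : P.Nonempty) {f : ι → ℝ}
    (hf : Satisfies isIn (typingOf isIn P) f) {A : Finset ι} {a b : ℝ}
    (hab : ∀ g ∈ P, theta isIn A g ∈ Set.Icc a b) : theta isIn A f ∈ Set.Icc a b := by
  obtain ⟨hlo, hhi⟩ := hf.2 A _ _ rfl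
  refine ⟨le_trans ?_ hlo, hhi.trans ?_⟩
  · exact le_csInf (hne.image _) (by rintro _ ⟨g, hg, rfl⟩; exact (hab g hg).1)
  · exact csSup_le (hne.image _) (by rintro _ ⟨g, hg, rfl⟩; exact (hab g hg).2)

lemma apply_le_of_satisfies_typingOf (hne : P.Nonempty) {f : ι → ℝ}
    (hf : Satisfies isIn (typingOf isIn P) f) (a : ι) {c : ℝ}
    (hP : ∀ g ∈ P, g a ∈ Set.Icc 0 c) : f a ≤ c := by
  have hbound : ∀ g ∈ P, theta isIn {a} g ∈ Set.Icc (-c) c := fun g hg => by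
    obtain ⟨hg0, hgc⟩ := hP g hg
    rw [theta_singleton]
    split_ifs <;> constructor <;> linarith
  have hf' := theta_mem_Icc_of_satisfies_typingOf hne hf hbound
  rw [theta_singleton] at hf'
  split_ifs at hf' <;> linarith [hf'.1, hf'.2]

variable [Fintype ι]

lemma wf_typingOf (hP : IsCompact P) (hne : P.Nonempty) : WF (typingOf isIn P) := by
  intro A r s hA
  obtain ⟨rfl, rfl⟩ := typingOf_eq_some hA
  have hc := hP.image (continuous_theta isIn A)
  exact csInf_le_csSup (hne.image _) hc.bddBelow hc.bddAbove

lemma subset_poly_typingOf (hP : IsCompact P) (hnn : ∀ f ∈ P, ∀ a, 0 ≤ f a) :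
    P ⊆ Poly isIn (typingOf isIn P) := by
  intro f hf
  refine ⟨hnn f hf, fun A r s hA => ?_⟩
  obtain ⟨rfl, rfl⟩ := typingOf_eq_some hA
  have hc := hP.image (continuous_theta isIn A)
  exact ⟨csInf_le hc.bddBelow (Set.mem_image_of_mem _ hf),
    le_csSup hc.bddAbove (Set.mem_image_of_mem _ hf)⟩

/-- The image of `P` under `theta isIn A` is a compact interval, so contains every value between
its extremes. -/
lemma tight_typingOf (hP : IsCompact P) (hconv : Convex ℝ P) (hne : P.Nonempty)
    (hnn : ∀ f ∈ P, ∀ a, 0 ≤ f a) : Tight isIn (typingOf isIn P) := by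
  intro A r s hA x hr hs
  obtain ⟨rfl, rfl⟩ := typingOf_eq_some hA
  have hc := hP.image (continuous_theta isIn A)
  have hord := (hconv.is_linear_image (isLinearMap_theta isIn A)).ordConnected
  obtain ⟨f, hf, rfl⟩ :=
    hord.out (hc.sInf_mem (hne.image _)) (hc.sSup_mem (hne.image _)) ⟨hr, hs⟩
  exact ⟨f, subset_poly_typingOf hP hnn hf, rfl⟩

end TypingOf

section Networks

variable {ι : Type*} [Fintype ι] {isIn : ι → Bool}

def flowSet (N : Network ι isIn) : Set (ι → ℝ) := {f | ∃ g, N.Feasible f g}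

lemma nonneg_of_mem_flowSet (N : Network ι isIn) : ∀ f ∈ flowSet N, ∀ a, 0 ≤ f a :=
  fun _ ⟨_, hio, _⟩ a => (N.lcIO_nonneg a).trans (hio a).1

lemma sound_and_complete_iff {N : Network ι isIn} {T : Typing ι} :
    Sound N T ∧ Complete N T ↔ Poly isIn T = flowSet N :=
  ⟨fun ⟨hs, hc⟩ => subset_antisymm hs fun _ ⟨g, hfg⟩ => hc _ g hfg,
    fun h => ⟨h.le, fun _ g hfg => h.ge ⟨g, hfg⟩⟩⟩

lemma isPrincipal_typingOf_flowSet {N : Network ι isIn} (hc : IsCompact (flowSet N))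
    (hconv : Convex ℝ (flowSet N)) (hne : (flowSet N).Nonempty)
    (hpoly : Poly isIn (typingOf isIn (flowSet N)) ⊆ flowSet N) :
    IsPrincipal isIn (typingOf isIn (flowSet N)) :=
  ⟨wf_typingOf hc hne, totalT_typingOf, tight_typingOf hc hconv hne (nonneg_of_mem_flowSet N),
    N, sound_and_complete_iff.2
      (subset_antisymm hpoly (subset_poly_typingOf hc (nonneg_of_mem_flowSet N)))⟩

end Networks

section UnitNetwork

variable {ι : Type*} [Fintype ι] {isIn : ι → Bool} {V : Type} [DecidableEq V]

lemma theta_fiber_eq (node : ι → V) (v : V) (f : ι → ℝ) :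
    theta isIn {a | node a = v} f =
      (∑ a, if node a = v ∧ isIn a then f a else 0) -
        ∑ a, if node a = v ∧ ¬ isIn a then f a else 0 := by
  rw [theta, Finset.sum_filter, ← Finset.sum_sub_distrib]
  refine Finset.sum_congr rfl fun a _ => ?_
  by_cases h : node a = v <;> cases isIn a <;> simp [h]

variable [Fintype V]

def unitNetwork (isIn : ι → Bool) (node : ι → V) : Network ι isIn where
  V := V
  E := Empty
  src := Empty.elim
  tgt := Empty.elim
  ioNode := node
  lcE := Empty.elim
  ucE := Empty.elim
  lcIO := 0
  ucIO := 1
  lcE_nonneg := fun e => e.elim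
  lcE_le_ucE := fun e => e.elim
  lcIO_nonneg := fun _ => le_rfl
  lcIO_le_ucIO := fun _ => zero_le_one

lemma flowSet_unitNetwork (node : ι → V) :
    flowSet (unitNetwork isIn node) =
      Set.Icc 0 1 ∩ ⋂ v, {f | theta isIn {a | node a = v} f = 0} := by
  ext f
  simp only [flowSet, Set.mem_inter_iff, Set.mem_iInter, Set.mem_ofPred_eq, theta_fiber_eq,
    sub_eq_zero]
  have : IsEmpty (unitNetwork isIn node).E := inferInstanceAs (IsEmpty Empty)
  simp only [Network.Feasible, Fintype.sum_empty, zero_add, IsEmpty.forall_iff, true_and]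
  constructor
  · rintro ⟨-, hio, hcons⟩
    exact ⟨⟨fun a => (hio a).1, fun a => (hio a).2⟩, hcons⟩
  · rintro ⟨⟨h0, h1⟩, hcons⟩
    exact ⟨isEmptyElim, fun a => ⟨h0 a, h1 a⟩, hcons⟩

lemma isCompact_flowSet_unitNetwork (node : ι → V) :
    IsCompact (flowSet (unitNetwork isIn node)) := by
  rw [flowSet_unitNetwork]
  exact isCompact_Icc.inter_right
    (isClosed_iInter fun v => isClosed_eq (continuous_theta isIn _) continuous_const)

lemma convex_flowSet_unitNetwork (node : ι → V) :
    Convex ℝ (flowSet (unitNetwork isIn node)) := by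
  rw [flowSet_unitNetwork]
  exact (convex_Icc 0 1).inter
    (convex_iInter fun v => convex_hyperplane (isLinearMap_theta isIn _) 0)

lemma zero_mem_flowSet_unitNetwork (node : ι → V) : 0 ∈ flowSet (unitNetwork isIn node) := by
  rw [flowSet_unitNetwork]
  exact ⟨⟨le_rfl, zero_le_one⟩,
    Set.mem_iInter.2 fun v => (isLinearMap_theta isIn _).map_zero⟩

lemma poly_typingOf_unitNetwork (node : ι → V) :
    Poly isIn (typingOf isIn (flowSet (unitNetwork isIn node))) =
      flowSet (unitNetwork isIn node) := by
  refine subset_antisymm (fun f hf => ?_)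
    (subset_poly_typingOf (isCompact_flowSet_unitNetwork node) (nonneg_of_mem_flowSet _))
  have hne := zero_mem_flowSet_unitNetwork (isIn := isIn) node
  rw [flowSet_unitNetwork] at hf hne ⊢
  refine ⟨⟨hf.1, fun a => ?_⟩, Set.mem_iInter.2 fun v => ?_⟩
  · exact apply_le_of_satisfies_typingOf ⟨_, hne⟩ hf a fun g hg => ⟨hg.1.1 a, hg.1.2 a⟩
  · have hv := theta_mem_Icc_of_satisfies_typingOf (A := {a | node a = v}) ⟨_, hne⟩ hf
      fun g hg => by rw [Set.mem_iInter.1 hg.2 v]; exact Set.left_mem_Icc.2 le_rfl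
    exact le_antisymm hv.2 hv.1

lemma isPrincipal_typingOf_unitNetwork (node : ι → V) :
    IsPrincipal isIn (typingOf isIn (flowSet (unitNetwork isIn node))) :=
  isPrincipal_typingOf_flowSet (isCompact_flowSet_unitNetwork node)
    (convex_flowSet_unitNetwork node) ⟨0, zero_mem_flowSet_unitNetwork node⟩
    (poly_typingOf_unitNetwork node).le

/-- The conservation law at the single node is the sum of those at the original nodes. -/
lemma flowSet_unitNetwork_subset_const (node : ι → V) :
    flowSet (unitNetwork isIn node) ⊆ flowSet (unitNetwork isIn fun _ => ()) := by
  rw [flowSet_unitNetwork, flowSet_unitNetwork]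
  rintro f ⟨hbox, hcons⟩
  refine ⟨hbox, Set.mem_iInter.2 fun _ => ?_⟩
  have hfiber := Set.mem_iInter.1 hcons
  simp only [Set.mem_ofPred_eq, theta, Finset.filter_true] at hfiber ⊢
  rw [← Finset.sum_fiberwise Finset.univ node]
  exact Finset.sum_eq_zero fun v _ => hfiber v

end UnitNetwork

section Counterexample

def twoInTwoOut : Fin 4 → Bool := fun a => decide (a.val < 2)

/-- Arcs `0, 2` are attached to node `0` and arcs `1, 3` to node `1`. -/
def parityNode (a : Fin 4) : Fin 2 := Fin.ofNat 2 a

abbrev oneNodeTyping : Typing (Fin 4) :=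
  typingOf twoInTwoOut (flowSet (unitNetwork twoInTwoOut fun _ => ()))

abbrev twoNodeTyping : Typing (Fin 4) :=
  typingOf twoInTwoOut (flowSet (unitNetwork twoInTwoOut parityNode))

lemma subT_oneNodeTyping_twoNodeTyping : SubT twoInTwoOut oneNodeTyping twoNodeTyping := by
  unfold SubT
  rw [poly_typingOf_unitNetwork, poly_typingOf_unitNetwork]
  exact flowSet_unitNetwork_subset_const parityNode

lemma mem_flowSet_oneNode_iff (f : Fin 4 → ℝ) :
    f ∈ flowSet (unitNetwork twoInTwoOut fun _ => ()) ↔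
      f ∈ Set.Icc 0 1 ∧ f 0 + f 1 = f 2 + f 3 := by
  rw [flowSet_unitNetwork, Set.mem_inter_iff]
  refine and_congr_right fun _ => ?_
  simp [theta, Fin.sum_univ_four, twoInTwoOut]
  constructor <;> intro h <;> linarith

lemma mem_flowSet_twoNode_iff (f : Fin 4 → ℝ) :
    f ∈ flowSet (unitNetwork twoInTwoOut parityNode) ↔
      f ∈ Set.Icc 0 1 ∧ f 0 = f 2 ∧ f 1 = f 3 := by
  have h0 : ({a | parityNode a = 0} : Finset (Fin 4)) = {0, 2} := by decide
  have h1 : ({a | parityNode a = 1} : Finset (Fin 4)) = {1, 3} := by decide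
  rw [flowSet_unitNetwork, Set.mem_inter_iff]
  refine and_congr_right fun _ => ?_
  simp [Fin.forall_fin_two, h0, h1, theta, twoInTwoOut, ← sub_eq_add_neg, sub_eq_zero]

/-- A unit of flow entering at arc `0` and leaving at arc `3` passes through the single node but
not through the two nodes, although its input part `(1, 0)` is that of a flow through the two
nodes, namely the one leaving at arc `2`. -/
lemma not_strongSubT_oneNodeTyping_twoNodeTyping :
    ¬ StrongSubT twoInTwoOut oneNodeTyping twoNodeTyping := by
  rintro ⟨hsafe, -⟩
  have hbox : ![1, 0, 0, 1] ∈ Set.Icc (0 : Fin 4 → ℝ) 1 :=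
    ⟨fun a => by fin_cases a <;> simp, fun a => by fin_cases a <;> simp⟩
  have hone : ![1, 0, 0, 1] ∈ flowSet (unitNetwork twoInTwoOut fun _ => ()) :=
    (mem_flowSet_oneNode_iff _).2 ⟨hbox, by simp⟩
  have htwo : ![1, 0, 0, 1] ∉ flowSet (unitNetwork twoInTwoOut parityNode) := by
    simp [mem_flowSet_twoNode_iff]
  have hrestr :
      Satisfies twoInTwoOut (restrictTo (inputs twoInTwoOut) twoNodeTyping) ![1, 0, 0, 1] := by
    have hflow : ![1, 0, 1, 0] ∈ flowSet (unitNetwork twoInTwoOut parityNode) :=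
      (mem_flowSet_twoNode_iff _).2 ⟨⟨fun a => by fin_cases a <;> simp,
        fun a => by fin_cases a <;> simp⟩, by simp, by simp⟩
    have hsat : Satisfies twoInTwoOut twoNodeTyping ![1, 0, 1, 0] :=
      subset_poly_typingOf (isCompact_flowSet_unitNetwork _) (nonneg_of_mem_flowSet _) hflow
    refine (hsat.restrict _).restrict_congr hbox.1 fun a ha => ?_
    fin_cases a <;> simp_all [inputs, twoInTwoOut]
  rw [← poly_typingOf_unitNetwork] at hone htwo
  exact htwo ((hsafe _ hrestr).2 hone)

end Counterexample

/-- Strong subtyping of principal typings over a common arc set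
is a partial order refining subtyping: reflexive, antisymmetric, transitive, and
`T ≪: U → T <: U`, while the converse fails in general. -/
theorem strongSubT_partialOrder (isIn : ι → Bool) :
    (∀ T : Typing ι, IsPrincipal isIn T → StrongSubT isIn T T) ∧
    (∀ T U : Typing ι, IsPrincipal isIn T → IsPrincipal isIn U →
      StrongSubT isIn T U → StrongSubT isIn U T → T = U) ∧
    (∀ S T U : Typing ι, IsPrincipal isIn S → IsPrincipal isIn T →
      IsPrincipal isIn U → StrongSubT isIn S T → StrongSubT isIn T U →
      StrongSubT isIn S U) ∧
    (∀ T U : Typing ι, IsPrincipal isIn T → IsPrincipal isIn U →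
      StrongSubT isIn T U → SubT isIn T U) ∧
    (∃ (isIn4 : Fin 4 → Bool) (T U : Typing (Fin 4)),
      IsPrincipal isIn4 T ∧ IsPrincipal isIn4 U ∧ SubT isIn4 T U ∧
        ¬ StrongSubT isIn4 T U) := by
  refine ⟨fun T _ => strongSubT_refl T, fun T U hT hU hTU hUT => ?_,
    fun S T U _ _ hU hST hTU => hST.trans hTU hU.2.2.1 hU.2.1,
    fun T U _ _ h => h.subT, ?_⟩
  · exact eq_of_poly_eq hT.1 hT.2.1 hT.2.2.1 hU.1 hU.2.1 hU.2.2.1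
      (subset_antisymm hUT.subT hTU.subT)
  · exact ⟨twoInTwoOut, oneNodeTyping, twoNodeTyping, isPrincipal_typingOf_unitNetwork _,
      isPrincipal_typingOf_unitNetwork _, subT_oneNodeTyping_twoNodeTyping,
      not_strongSubT_oneNodeTyping_twoNodeTyping⟩

end
end FlowTyping
end
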